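/- arXiv:2311.06704 — 2 statements merged into one kernel-verified Lean document; each statement's English description precedes it below -/
import Mathlib

section
/- For every natural number n and every real number z > 1/4, setting θ = arctan(√(4z−1)) (so θ ∈ (0, π/2)), one has g_n(z) = sin((n+1)θ)/sin θ; in particular, g_{2n}(z) = sin((2n+1)θ)/sin θ, i.e. g_{2n}(z) equals the n-th Dirichlet kernel D_n evaluated at 2θ, where D_n(θ) = sin((n + 1/2)θ)/sin(θ/2). -/
/-- The G-polynomials: `G 0 z = 1`, `G 1 z = 1`, `G (n+2) z = G (n+1) z - z * G n z`. -/
noncomputable def G : ℕ → ℝ → ℝ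
  | 0, _ => 1
  | 1, _ => 1
  | (n + 2), z => G (n + 1) z - z * G n z

/-- The irrational functions `g n z = G n z / (√z)^n`. -/
noncomputable def g (n : ℕ) (z : ℝ) : ℝ := G n z / (Real.sqrt z) ^ n

/-- The `n`-th Dirichlet kernel. -/
noncomputable def dirichletKernel (n : ℕ) (θ : ℝ) : ℝ :=
  Real.sin (((n : ℝ) + 1 / 2) * θ) / Real.sin (θ / 2)

/-! Dividing the recurrence of `G` by `(√z)^(n+2)` gives `g (n+2) = 2c · g (n+1) - g n` with
`c = 1/(2√z)`, `g 0 = 1`, `g 1 = 2c`: this is the recurrence of the Chebyshev polynomials of the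
second kind, so `g n z = U_n(c)`. For `z > 1/4` one has `c = cos θ` with `θ = arctan √(4z-1)`
(as `1 + (4z-1) = (2√z)^2`), and `U_n(cos θ) sin θ = sin((n+1)θ)`. -/

open Real Polynomial Polynomial.Chebyshev

lemma g_add_two {z : ℝ} (hz : 0 < z) (m : ℕ) :
    g (m + 2) z = 2 * (2 * √z)⁻¹ * g (m + 1) z - g m z := by
  have hsqrt : √z ≠ 0 := (sqrt_pos.mpr hz).ne'
  simp only [g, G, pow_succ]
  field_simp
  linear_combination G m z * mul_self_sqrt hz.le

theorem g_eq_eval_U {z : ℝ} (hz : 0 < z) (n : ℕ) : g n z = (U ℝ n).eval (2 * √z)⁻¹ := by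
  induction n using Nat.twoStepInduction with
  | zero => simp [g, G]
  | one =>
    have hsqrt : √z ≠ 0 := (sqrt_pos.mpr hz).ne'
    simp only [g, G, pow_one, Nat.cast_one, U_one, eval_mul, eval_ofNat, eval_X]
    field_simp
  | more m ih₀ ih₁ =>
    rw [g_add_two hz, ih₀, ih₁]
    push_cast
    simp only [U_add_two, eval_sub, eval_mul, eval_ofNat, eval_X]

lemma cos_arctan_sqrt_four_mul_sub_one {z : ℝ} (hz : 1 / 4 ≤ z) :
    cos (arctan √(4 * z - 1)) = (2 * √z)⁻¹ := by
  rw [cos_arctan, sq_sqrt (by linarith), add_sub_cancel, sqrt_mul zero_le_four,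
    show √4 = 2 by rw [show (4 : ℝ) = 2 ^ 2 by norm_num, sqrt_sq zero_le_two], one_div]

lemma dirichletKernel_two_mul (n : ℕ) (θ : ℝ) :
    dirichletKernel n (2 * θ) = sin ((2 * n + 1) * θ) / sin θ := by
  rw [dirichletKernel, mul_div_cancel_left₀ θ two_ne_zero]
  ring_nf

theorem stmt_11 (n : ℕ) (z : ℝ) (hz : 1 / 4 < z) :
    g n z = Real.sin ((n + 1) * Real.arctan (Real.sqrt (4 * z - 1))) /
        Real.sin (Real.arctan (Real.sqrt (4 * z - 1))) ∧
    g (2 * n) z = dirichletKernel n (2 * Real.arctan (Real.sqrt (4 * z - 1))) := by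
  set θ := arctan √(4 * z - 1)
  have hsin : sin θ ≠ 0 :=
    (sin_arctan_pos.mpr (sqrt_pos.mpr (by linarith))).ne'
  have hg (m : ℕ) : g m z = sin ((m + 1) * θ) / sin θ := by
    rw [eq_div_iff hsin, g_eq_eval_U (by linarith), ← cos_arctan_sqrt_four_mul_sub_one hz.le]
    exact_mod_cast U_real_cos θ m
  refine ⟨hg n, ?_⟩
  rw [hg, dirichletKernel_two_mul, Nat.cast_mul, Nat.cast_two]
end

section
/- For every natural number n, the function v = g_n solves the singular Sturm–Liouville equation d/dz[ (4z−1)^{3/2} · v'(z) ] + n(n+2) · (√(4z−1)/(4z²)) · v(z) = 0 for all real z > 1/4; that is, for every z > 1/4, the derivative at z of the function w ↦ (4w−1)^{3/2}·g_n'(w) plus n(n+2)·(√(4z−1)/(4z²))·g_n(z) equals 0. -/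
open Polynomial Filter Topology

noncomputable def Gpoly : ℕ → ℝ[X]
  | 0 => 1
  | 1 => 1
  | n + 2 => Gpoly (n + 1) - X * Gpoly n

theorem eval_Gpoly (n : ℕ) (z : ℝ) : (Gpoly n).eval z = G n z := by
  induction n using Nat.strong_induction_on with
  | _ n ih =>
    match n with
    | 0 | 1 => simp [Gpoly, G]
    | m + 2 => simp [Gpoly, G, ih m (by omega), ih (m + 1) (by omega)]

theorem derivative_Gpoly_add_two (n : ℕ) :
    derivative (Gpoly (n + 2)) =
      derivative (Gpoly (n + 1)) - Gpoly n - X * derivative (Gpoly n) := by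
  rw [Gpoly, derivative_sub, derivative_mul, derivative_X, one_mul, sub_sub]

theorem Gpoly_first_order_relation (n : ℕ) :
    X * (4 * X - 1) * derivative (Gpoly n) =
      ((n : ℝ[X]) + 1) * (Gpoly (n + 1) - Gpoly n) + 2 * (n : ℝ[X]) * X * Gpoly n := by
  induction n using Nat.strong_induction_on with
  | _ n ih =>
    match n with
    | 0 => simp [Gpoly]
    | 1 => simp [Gpoly]; ring
    | m + 2 =>
      have ih₀ := ih m (by omega)
      have ih₁ := ih (m + 1) (by omega)
      rw [derivative_Gpoly_add_two, Gpoly.eq_3 (m + 1), Gpoly.eq_3 m]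
      rw [Gpoly.eq_3 m] at ih₁
      push_cast at ih₁ ⊢
      linear_combination ih₁ - X * ih₀

theorem derivative_derivative_Gpoly_add_two (n : ℕ) :
    derivative (derivative (Gpoly (n + 2))) =
      derivative (derivative (Gpoly (n + 1))) - 2 * derivative (Gpoly n) -
        X * derivative (derivative (Gpoly n)) := by
  rw [derivative_Gpoly_add_two, derivative_sub, derivative_sub, derivative_mul, derivative_X]
  ring

theorem Gpoly_second_order_ode (n : ℕ) :
    X * (4 * X - 1) * derivative (derivative (Gpoly n)) +
      ((6 - 4 * (n : ℝ[X])) * X + (n : ℝ[X])) * derivative (Gpoly n) +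
        (n : ℝ[X]) * ((n : ℝ[X]) - 1) * Gpoly n = 0 := by
  induction n using Nat.strong_induction_on with
  | _ n ih =>
    match n with
    | 0 | 1 => simp [Gpoly]
    | m + 2 =>
      have ih₀ := ih m (by omega)
      have ih₁ := ih (m + 1) (by omega)
      have rel := Gpoly_first_order_relation (m + 1)
      -- only `X` times the equation is a combination of the previous two and of `rel`
      refine mul_right_injective₀ (X_ne_zero : (X : ℝ[X]) ≠ 0) ?_
      rw [derivative_derivative_Gpoly_add_two, derivative_Gpoly_add_two, Gpoly.eq_3]
      rw [Gpoly.eq_3] at rel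
      push_cast at *
      linear_combination X * ih₁ - X * X * ih₀ - rel

theorem hasDerivAt_eval_mul_rpow (p : ℝ[X]) (a : ℝ) {w : ℝ} (hw : 0 < w) :
    HasDerivAt (fun x => p.eval x * x ^ a)
      ((X * derivative p + C a * p).eval w * w ^ (a - 1)) w := by
  refine ((p.hasDerivAt w).mul (Real.hasDerivAt_rpow_const (Or.inl hw.ne'))).congr_deriv ?_
  rw [Real.rpow_sub_one hw.ne']
  simp only [eval_add, eval_mul, eval_X, eval_C]
  field_simp

theorem g_eq_eval_Gpoly_mul_rpow (n : ℕ) {w : ℝ} (hw : 0 < w) :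
    g n w = (Gpoly n).eval w * w ^ (-(n : ℝ) / 2) := by
  rw [g, eval_Gpoly, Real.sqrt_eq_rpow, ← Real.rpow_natCast, ← Real.rpow_mul hw.le,
    div_eq_mul_inv, ← Real.rpow_neg hw.le]
  ring_nf

theorem deriv_g_eventuallyEq (n : ℕ) {z : ℝ} (hz : 0 < z) :
    deriv (g n) =ᶠ[𝓝 z] fun w =>
      (X * derivative (Gpoly n) + C (-(n : ℝ) / 2) * Gpoly n).eval w *
        w ^ (-(n : ℝ) / 2 - 1) := by
  filter_upwards [Ioi_mem_nhds hz] with w hw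
  refine ((hasDerivAt_eval_mul_rpow _ _ hw).congr_of_eventuallyEq ?_).deriv
  filter_upwards [Ioi_mem_nhds hw] with x hx
  exact g_eq_eval_Gpoly_mul_rpow n hx

theorem stmt_14 (n : ℕ) (z : ℝ) (hz : 1 / 4 < z) :
    deriv (fun w : ℝ => (4 * w - 1) ^ (3 / 2 : ℝ) * deriv (g n) w) z +
      (n : ℝ) * ((n : ℝ) + 2) * (Real.sqrt (4 * z - 1) / (4 * z ^ 2)) * g n z = 0 := by
  have hz₀ : 0 < z := by linarith
  have hz₁ : 0 < 4 * z - 1 := by linarith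
  set q : ℝ[X] := X * derivative (Gpoly n) + C (-(n : ℝ) / 2) * Gpoly n
  have hweight : HasDerivAt (fun w : ℝ => (4 * w - 1) ^ (3 / 2 : ℝ))
      (4 * (3 / 2) * (4 * z - 1) ^ ((3 / 2 : ℝ) - 1)) z := by
    simpa using
      (((hasDerivAt_id z).const_mul 4).sub_const 1).rpow_const (p := 3 / 2) (Or.inl hz₁.ne')
  have hflux : HasDerivAt (fun w => (4 * w - 1) ^ (3 / 2 : ℝ) * deriv (g n) w) _ z :=
    (hweight.fun_mul (hasDerivAt_eval_mul_rpow q (-(n : ℝ) / 2 - 1) hz₀)).congr_of_eventuallyEq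
      ((deriv_g_eventuallyEq n hz₀).mono fun w hw => by simp only [hw, q])
  rw [hflux.deriv, g_eq_eval_Gpoly_mul_rpow n hz₀]
  have hsqrt : Real.sqrt (4 * z - 1) = (4 * z - 1) ^ (3 / 2 : ℝ) / (4 * z - 1) := by
    rw [← Real.rpow_sub_one hz₁.ne', Real.sqrt_eq_rpow]
    norm_num
  simp only [Real.rpow_sub_one hz₀.ne', Real.rpow_sub_one hz₁.ne', hsqrt, q, derivative_add,
    derivative_mul, derivative_X, derivative_C, eval_add, eval_mul, eval_X, eval_C, zero_mul,
    zero_add, one_mul, neg_div]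
  have hode := congrArg (eval z) (Gpoly_second_order_ode n)
  simp only [eval_add, eval_mul, eval_sub, eval_X, eval_natCast, eval_ofNat, eval_one,
    eval_zero] at hode
  field_simp
  linear_combination (16 * z * (4 * z - 1) ^ (3 / 2 : ℝ) * z ^ (-((n : ℝ) / 2))) * hode
end
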